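/- Let 0 < ν < 1 and 0 ≤ b < a. Then lim_{t→∞} t^{2ν} (I(t) − C_ν/t^ν) = (b^{2ν} / (2^ν Γ(ν+1))) · C_ν; that is, I(t) = C_ν/t^ν + (b^{2ν}/(2^ν Γ(ν+1))) · C_ν/t^{2ν} + o(t^{-2ν}) as t → ∞. -/

import Mathlib

open MeasureTheory Filter

/-- `F ν x t = (x^{2ν}/(2^ν Γ(ν))) ∫_t^∞ s^{-(ν+1)} exp(-x²/(2s)) ds`. -/
noncomputable def F (ν x t : ℝ) : ℝ :=
  (x ^ (2 * ν) / (2 ^ ν * Real.Gamma ν)) *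
    ∫ s in Set.Ioi t, s ^ (-(ν + 1)) * Real.exp (-x ^ 2 / (2 * s))

/-!
Since `0 ≤ 1 - exp(-x²/(2s)) ≤ x²/(2s)`, dropping the exponential from the integral defining
`F ν x t` costs `O(t^{-(ν+1)})`, so `F ν x t = c_x t^{-ν} + O(t^{-(ν+1)})` with
`c_x = asympCoeff ν x`. Over the denominator `1 - F ν b t → 1`, the numerator of
`I(t) - C_ν t^{-ν}` is `(F ν a t - c_a t^{-ν}) - (F ν b t - c_b t^{-ν}) + C_ν t^{-ν} F ν b t`;
the first two terms are `o(t^{-2ν})` because `ν < 1`, and `t^ν F ν b t → c_b`.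
-/

open Set Asymptotics

noncomputable def asympCoeff (ν x : ℝ) : ℝ :=
  x ^ (2 * ν) / (2 ^ ν * Real.Gamma (ν + 1))

lemma integral_Ioi_rpow_neg_add_one {r t : ℝ} (hr : 0 < r) (ht : 0 < t) :
    ∫ s in Ioi t, s ^ (-(r + 1)) = t ^ (-r) / r := by
  rw [integral_Ioi_rpow_of_lt (by linarith) ht, show -(r + 1) + 1 = -r by ring, neg_div_neg_eq]

lemma exp_neg_sq_div_le_one (x : ℝ) {s : ℝ} (hs : 0 ≤ s) : Real.exp (-x ^ 2 / (2 * s)) ≤ 1 :=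
  Real.exp_le_one_iff.mpr (div_nonpos_of_nonpos_of_nonneg (by nlinarith) (by positivity))

lemma integrableOn_Ioi_rpow_mul_exp {r t : ℝ} (x : ℝ) (hr : r < -1) (ht : 0 < t) :
    IntegrableOn (fun s => s ^ r * Real.exp (-x ^ 2 / (2 * s))) (Ioi t) := by
  refine (integrableOn_Ioi_rpow_of_lt hr ht).integrable.mono' ?_ ?_
  · refine ContinuousOn.aestronglyMeasurable (fun s hs => ?_) measurableSet_Ioi
    have hs0 : s ≠ 0 := (ht.trans hs).ne'
    exact ((Real.continuousAt_rpow_const s r (Or.inl hs0)).mul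
      (by fun_prop (disch := positivity))).continuousWithinAt
  · filter_upwards [ae_restrict_mem measurableSet_Ioi] with s hs
    have hs0 : 0 < s := ht.trans hs
    rw [Real.norm_eq_abs, abs_of_nonneg (by positivity)]
    exact mul_le_of_le_one_right (by positivity) (exp_neg_sq_div_le_one x hs0.le)

lemma abs_rpow_mul_exp_sub_rpow_le (r x : ℝ) {s : ℝ} (hs : 0 < s) :
    |s ^ r * Real.exp (-x ^ 2 / (2 * s)) - s ^ r| ≤ x ^ 2 / 2 * s ^ (r - 1) := by
  have hlow : 1 - x ^ 2 / (2 * s) ≤ Real.exp (-x ^ 2 / (2 * s)) := by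
    simpa [neg_div] using Real.one_sub_le_exp_neg (x ^ 2 / (2 * s))
  have hpos := Real.rpow_nonneg hs.le r
  have hdiff : 0 ≤ s ^ r - s ^ r * Real.exp (-x ^ 2 / (2 * s)) := by
    nlinarith [exp_neg_sq_div_le_one x hs.le]
  rw [abs_sub_comm, abs_of_nonneg hdiff, Real.rpow_sub_one hs.ne']
  calc s ^ r - s ^ r * Real.exp (-x ^ 2 / (2 * s))
      ≤ s ^ r * (x ^ 2 / (2 * s)) := by nlinarith
    _ = x ^ 2 / 2 * (s ^ r / s) := by ring

lemma F_sub_eq (ν x : ℝ) (hν : 0 < ν) {t : ℝ} (ht : 0 < t) :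
    F ν x t - asympCoeff ν x * t ^ (-ν) = x ^ (2 * ν) / (2 ^ ν * Real.Gamma ν) *
      ∫ s in Ioi t, (s ^ (-(ν + 1)) * Real.exp (-x ^ 2 / (2 * s)) - s ^ (-(ν + 1))) := by
  rw [integral_sub (integrableOn_Ioi_rpow_mul_exp x (by linarith) ht)
    (integrableOn_Ioi_rpow_of_lt (by linarith) ht), integral_Ioi_rpow_neg_add_one hν ht, F,
    asympCoeff, Real.Gamma_add_one hν.ne']
  field_simp

lemma F_sub_isBigO (ν x : ℝ) (hν : 0 < ν) :
    (fun t => F ν x t - asympCoeff ν x * t ^ (-ν)) =O[atTop] fun t => t ^ (-(ν + 1)) := by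
  set K := ‖x ^ (2 * ν) / (2 ^ ν * Real.Gamma ν)‖
  refine IsBigO.of_bound (K * (x ^ 2 / 2) / (ν + 1)) ?_
  filter_upwards [eventually_gt_atTop 0] with t ht
  have hpointwise : ∀ᵐ s ∂(volume.restrict (Ioi t)),
      ‖s ^ (-(ν + 1)) * Real.exp (-x ^ 2 / (2 * s)) - s ^ (-(ν + 1))‖
        ≤ x ^ 2 / 2 * s ^ (-((ν + 1) + 1)) := by
    filter_upwards [ae_restrict_mem measurableSet_Ioi] with s hs
    rw [show -((ν + 1) + 1) = -(ν + 1) - 1 by ring]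
    exact abs_rpow_mul_exp_sub_rpow_le _ x (ht.trans hs)
  rw [F_sub_eq ν x hν ht, norm_mul, Real.norm_of_nonneg (Real.rpow_nonneg ht.le _)]
  calc K * ‖∫ s in Ioi t, (s ^ (-(ν + 1)) * Real.exp (-x ^ 2 / (2 * s)) - s ^ (-(ν + 1)))‖
      ≤ K * ∫ s in Ioi t, x ^ 2 / 2 * s ^ (-((ν + 1) + 1)) :=
        mul_le_mul_of_nonneg_left (norm_integral_le_of_norm_le
          ((integrableOn_Ioi_rpow_of_lt (by linarith) ht).integrable.const_mul _) hpointwise)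
          (norm_nonneg _)
    _ = K * (x ^ 2 / 2) / (ν + 1) * t ^ (-(ν + 1)) := by
        rw [integral_const_mul, integral_Ioi_rpow_neg_add_one (by linarith) ht]
        ring

lemma tendsto_rpow_mul_F_sub (ν x : ℝ) (hν : 0 < ν) {p : ℝ} (hp : p < ν + 1) :
    Tendsto (fun t => t ^ p * (F ν x t - asympCoeff ν x * t ^ (-ν))) atTop (nhds 0) := by
  refine ((isBigO_refl (fun t : ℝ => t ^ p) atTop).mul (F_sub_isBigO ν x hν)).trans_tendsto ?_
  refine (tendsto_rpow_neg_atTop (y := ν + 1 - p) (by linarith)).congr' ?_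
  filter_upwards [eventually_gt_atTop 0] with t ht
  rw [← Real.rpow_add ht]
  ring_nf

lemma tendsto_rpow_mul_F (ν x : ℝ) (hν : 0 < ν) :
    Tendsto (fun t => t ^ ν * F ν x t) atTop (nhds (asympCoeff ν x)) := by
  have h := (tendsto_rpow_mul_F_sub ν x hν (p := ν) (by linarith)).add_const (asympCoeff ν x)
  rw [zero_add] at h
  refine h.congr' ?_
  filter_upwards [eventually_gt_atTop 0] with t ht
  rw [mul_sub, mul_left_comm, ← Real.rpow_add ht, add_neg_cancel, Real.rpow_zero, mul_one,
    sub_add_cancel]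

lemma tendsto_F (ν x : ℝ) (hν : 0 < ν) : Tendsto (fun t => F ν x t) atTop (nhds 0) := by
  have h := (tendsto_rpow_neg_atTop hν).mul (tendsto_rpow_mul_F ν x hν)
  rw [zero_mul] at h
  refine h.congr' ?_
  filter_upwards [eventually_gt_atTop 0] with t ht
  rw [← mul_assoc, ← Real.rpow_add ht, neg_add_cancel, Real.rpow_zero, one_mul]

lemma sq_mul_div_one_sub_sub {Fa Fb ca cb u : ℝ} (hu : u ≠ 0) (hFb : Fb ≠ 1) :
    u ^ 2 * ((Fa - Fb) / (1 - Fb) - (ca - cb) / u) =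
      (u ^ 2 * (Fa - ca * u⁻¹) - u ^ 2 * (Fb - cb * u⁻¹) + (ca - cb) * (u * Fb)) / (1 - Fb) := by
  have : 1 - Fb ≠ 0 := sub_ne_zero.mpr hFb.symm
  field_simp
  ring

theorem stmt_14_general (ν a b : ℝ) (hν : 0 < ν) (hν1 : ν < 1) :
    Tendsto (fun t : ℝ =>
        t ^ (2 * ν) *
          ((F ν a t - F ν b t) / (1 - F ν b t) -
            ((a ^ (2 * ν) - b ^ (2 * ν)) / (2 ^ ν * Real.Gamma (ν + 1))) / t ^ ν))
      atTop
      (nhds ((b ^ (2 * ν) / (2 ^ ν * Real.Gamma (ν + 1))) *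
        ((a ^ (2 * ν) - b ^ (2 * ν)) / (2 ^ ν * Real.Gamma (ν + 1))))) := by
  have hFb := tendsto_F ν b hν
  have hlim := (((tendsto_rpow_mul_F_sub ν a hν (p := 2 * ν) (by linarith)).sub
    (tendsto_rpow_mul_F_sub ν b hν (p := 2 * ν) (by linarith))).add
    ((tendsto_rpow_mul_F ν b hν).const_mul (asympCoeff ν a - asympCoeff ν b))).div
    (tendsto_const_nhds.sub hFb) (by norm_num : (1 : ℝ) - 0 ≠ 0)
  rw [sub_div, ← asympCoeff, ← asympCoeff]
  convert hlim.congr' ?_ using 2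
  · simp only [sub_zero, zero_add, div_one]
    ring
  filter_upwards [eventually_gt_atTop 0, hFb.eventually_ne (zero_ne_one' ℝ)] with t ht hFb1
  have hsq : t ^ (2 * ν) = (t ^ ν) ^ 2 := by
    rw [← Real.rpow_natCast, ← Real.rpow_mul ht.le, mul_comm, Nat.cast_ofNat]
  rw [Pi.div_apply, hsq, Real.rpow_neg ht.le]
  exact (sq_mul_div_one_sub_sub (Real.rpow_pos_of_pos ht ν).ne' hFb1).symm

theorem stmt_14 (ν a b : ℝ) (hν : 0 < ν) (hν1 : ν < 1) (hb : 0 ≤ b) (hba : b < a) :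
    Tendsto (fun t : ℝ =>
        t ^ (2 * ν) *
          ((F ν a t - F ν b t) / (1 - F ν b t) -
            ((a ^ (2 * ν) - b ^ (2 * ν)) / (2 ^ ν * Real.Gamma (ν + 1))) / t ^ ν))
      atTop
      (nhds ((b ^ (2 * ν) / (2 ^ ν * Real.Gamma (ν + 1))) *
        ((a ^ (2 * ν) - b ^ (2 * ν)) / (2 ^ ν * Real.Gamma (ν + 1))))) :=
  stmt_14_general ν a b hν hν1
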